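/- arXiv:2004.09224 — 4 statements merged into one kernel-verified Lean document; each statement's English description precedes it below -/
import Mathlib

section
/- Let n ≥ 0 and k ≥ 0. In the polynomial ring ℤ[x_1, …, x_{n+1}, t], the complete homogeneous symmetric polynomial of degree k evaluated at the shifted variables satisfies h_k(x_1 + t, …, x_{n+1} + t) = ∑_{i=0}^{k} C(n+k, k−i) · h_i(x_1, …, x_{n+1}) · t^{k−i}. -/
/-!
Split off one variable: `h_{k+1}(x₀, x') = x₀ h_k(x₀, x') + h_{k+1}(x')`. Writing the right-hand
side of the identity as the coefficient of `s^k` in `(1 + t s)^{n+k} ∑ h_i s^i`, Pascal's rule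
`(1 + t s)^{N+1} = (1 + t s)^N + t s (1 + t s)^N` turns this recursion for `h_k(x + t)` into the
same recursion for the right-hand side, so the identity follows by induction on the number of
variables and on `k`.
-/

open MvPolynomial Finset

section BinomShiftSum

variable {A : Type*} [CommSemiring A]

/-- The coefficient of `s^k` in `(1 + t s)^N * ∑ f i * s^i`. -/
def binomShiftSum (f : ℕ → A) (t : A) (N k : ℕ) : A :=
  ∑ p ∈ antidiagonal k, (N.choose p.2 : A) * f p.1 * t ^ p.2

theorem binomShiftSum_zero (f : ℕ → A) (t : A) (N : ℕ) : binomShiftSum f t N 0 = f 0 := by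
  simp [binomShiftSum]

theorem binomShiftSum_succ_succ (f : ℕ → A) (t : A) (N k : ℕ) :
    binomShiftSum f t (N + 1) (k + 1) = binomShiftSum f t N (k + 1) + t * binomShiftSum f t N k := by
  simp only [binomShiftSum, Nat.sum_antidiagonal_succ', Nat.choose_succ_succ', Nat.cast_add,
    Nat.choose_zero_right, mul_sum]
  rw [add_assoc, ← sum_add_distrib]
  congr 1
  refine sum_congr rfl fun p _ => ?_
  ring

theorem binomShiftSum_succ_of_succ_eq {H G : ℕ → A} {x₀ : A}
    (hsucc : ∀ i, H (i + 1) = x₀ * H i + G (i + 1)) (h₀ : H 0 = G 0) (t : A) (N k : ℕ) :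
    binomShiftSum H t N (k + 1) = x₀ * binomShiftSum H t N k + binomShiftSum G t N (k + 1) := by
  simp only [binomShiftSum, Nat.sum_antidiagonal_succ, h₀, hsucc, mul_sum]
  rw [add_left_comm, ← sum_add_distrib]
  congr 1
  refine sum_congr rfl fun p _ => ?_
  ring

theorem add_pow_eq_binomShiftSum (x t : A) (k : ℕ) :
    (x + t) ^ k = binomShiftSum (x ^ ·) t k k := by
  rw [(Commute.all x t).add_pow', binomShiftSum]
  refine sum_congr rfl fun p hp => ?_
  rw [Nat.choose_symm_of_eq_add (mem_antidiagonal.mp hp).symm, nsmul_eq_mul]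
  ring

end BinomShiftSum

namespace MvPolynomial

variable {σ τ R A : Type*} [DecidableEq σ] [DecidableEq τ] [Fintype σ] [Fintype τ]
  [CommSemiring R] [CommSemiring A] [Algebra R A]

theorem hsymm_option_succ (k : ℕ) :
    hsymm (Option σ) R (k + 1) =
      X none * hsymm (Option σ) R k + rename some (hsymm σ R (k + 1)) := by
  rw [hsymm, ← Equiv.sum_comp symOptionSuccEquiv.symm, Fintype.sum_sum_type, hsymm, hsymm,
    mul_sum, map_sum]
  congr 1
  · refine sum_congr rfl fun s _ => ?_
    simp [symOptionSuccEquiv, Sym.cons]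
  · refine sum_congr rfl fun s _ => ?_
    simp [symOptionSuccEquiv, ← Multiset.prod_hom', Sym.map, Multiset.map_map]

theorem aeval_hsymm_option_succ (x : Option σ → A) (k : ℕ) :
    aeval x (hsymm (Option σ) R (k + 1)) =
      x none * aeval x (hsymm (Option σ) R k) + aeval (x ∘ some) (hsymm σ R (k + 1)) := by
  rw [hsymm_option_succ, map_add, map_mul, aeval_X, aeval_rename]

theorem hsymm_of_unique [Unique σ] (k : ℕ) : hsymm σ R k = X default ^ k := by
  rw [hsymm, Fintype.sum_unique]
  change (Multiset.map X (Multiset.replicate k default)).prod = _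
  rw [Multiset.map_replicate, Multiset.prod_replicate]

theorem aeval_comp_equiv_hsymm (e : σ ≃ τ) (x : τ → A) (k : ℕ) :
    aeval (x ∘ e) (hsymm σ R k) = aeval x (hsymm τ R k) := by
  rw [← rename_hsymm _ _ k e, aeval_rename]

theorem aeval_add_const_hsymm_option {n : ℕ} {t : A}
    (ih : ∀ (x : σ → A) k, aeval (fun j => x j + t) (hsymm σ R k) =
      binomShiftSum (fun i => aeval x (hsymm σ R i)) t (n + k) k)
    (x : Option σ → A) (k : ℕ) :
    aeval (fun j => x j + t) (hsymm (Option σ) R k) =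
      binomShiftSum (fun i => aeval x (hsymm (Option σ) R i)) t (n + 1 + k) k := by
  induction k with
  | zero => simp [binomShiftSum_zero]
  | succ k ihk =>
    set H : ℕ → A := fun i => aeval x (hsymm (Option σ) R i)
    set G : ℕ → A := fun i => aeval (x ∘ some) (hsymm σ R i)
    have hsucc (i : ℕ) : H (i + 1) = x none * H i + G (i + 1) := aeval_hsymm_option_succ x i
    calc aeval (fun j => x j + t) (hsymm (Option σ) R (k + 1))
        = (x none + t) * binomShiftSum H t (n + 1 + k) k + binomShiftSum G t (n + (k + 1)) (k + 1) := by
          rw [aeval_hsymm_option_succ, ihk]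
          exact congrArg _ (ih (x ∘ some) (k + 1))
      _ = binomShiftSum H t (n + 1 + k + 1) (k + 1) := by
          rw [show n + (k + 1) = n + 1 + k by omega, binomShiftSum_succ_succ,
            binomShiftSum_succ_of_succ_eq hsucc (by simp [H, G])]
          ring

theorem aeval_add_const_hsymm {n : ℕ} (hσ : Fintype.card σ = n + 1) (x : σ → A) (t : A) (k : ℕ) :
    aeval (fun j => x j + t) (hsymm σ R k) =
      binomShiftSum (fun i => aeval x (hsymm σ R i)) t (n + k) k := by
  induction n generalizing σ k with
  | zero =>
    obtain ⟨_⟩ := Fintype.card_eq_one_iff_nonempty_unique.mp hσ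
    simp only [hsymm_of_unique, map_pow, aeval_X, zero_add]
    exact add_pow_eq_binomShiftSum _ _ _
  | succ n ih =>
    obtain ⟨a⟩ : Nonempty σ := Fintype.card_pos_iff.mp (by omega)
    let e := Equiv.optionSubtypeNe a
    have hcard : Fintype.card {b // b ≠ a} = n + 1 := by
      simp [Fintype.card_subtype_compl, hσ]
    simp only [← aeval_comp_equiv_hsymm e]
    exact aeval_add_const_hsymm_option (ih hcard) (x ∘ e) k

end MvPolynomial

/-- In `ℤ[x_1, …, x_{n+1}, t]` (formalized as multivariate polynomials in `n+1` variables
over `ℤ[t]`), the complete homogeneous symmetric polynomial of degree `k` satisfies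
`h_k(x_1 + t, …, x_{n+1} + t) = ∑_{i=0}^{k} C(n+k, k−i) · h_i(x_1, …, x_{n+1}) · t^{k−i}`. -/
theorem hsymm_shift (n k : ℕ) :
    MvPolynomial.aeval
        (fun j : Fin (n + 1) =>
          (MvPolynomial.X j + MvPolynomial.C (Polynomial.X : Polynomial ℤ) :
            MvPolynomial (Fin (n + 1)) (Polynomial ℤ)))
        (MvPolynomial.hsymm (Fin (n + 1)) (Polynomial ℤ) k) =
      ∑ i ∈ Finset.range (k + 1),
        (Nat.choose (n + k) (k - i) : MvPolynomial (Fin (n + 1)) (Polynomial ℤ)) *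
          MvPolynomial.hsymm (Fin (n + 1)) (Polynomial ℤ) i *
          MvPolynomial.C (Polynomial.X : Polynomial ℤ) ^ (k - i) := by
  rw [aeval_add_const_hsymm (n := n) (by simp) X, binomShiftSum]
  simp only [Nat.sum_antidiagonal_eq_sum_range_succ_mk, aeval_X_left_apply]
end

section
/- Fix integers r ≥ 1 and k ≥ 1, and let λ = (λ_1, …, λ_k) ∈ Γ(k, r) be a partition of weight k with parts at most r. In the polynomial ring ℤ[c_1, …, c_r] (with conventions c_0 = 1 and c_j = 0 for j < 0 or j > r), the difference c_{λ_1}·c_{λ_2}⋯c_{λ_k} − c_k belongs to the cone P(k, r); that is, there exist nonnegative integers a_μ for μ ∈ Γ(k, r) such that c_{λ_1}⋯c_{λ_k} − c_k = ∑_{μ ∈ Γ(k, r)} a_μ S_μ. -/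
/-!
Think of `c_j` as the complete homogeneous symmetric functions `h_j`. Pieri's rule says that
`c_m · S_μ` is the sum of the `S_{μ+s}` over the horizontal strips `s` of size `m`. Iterating it
writes `c_{λ_1} ⋯ c_{λ_k}` as a sum of Schur polynomials, one of which is `S_{(k)} = c_k`: the
term obtained by putting every strip into the first row.

Pieri's rule is read off the Jacobi–Trudi determinant with generating series: summing row `i`
over the strips allowed in that row gives, after unitriangular row and column operations, the
matrix of tail series `∑_s c_{a+s} t^s`, whose determinant is `(∑_s c_s t^s) · S_μ`; the
coefficient of `t^m` is Pieri's rule.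
-/

/-- The generator `c_j` of `ℤ[c_1, …, c_r]`, with the conventions `c_0 = 1` and
`c_j = 0` for `j < 0` or `j > r`.  Here `c_j` for `1 ≤ j ≤ r` is the variable `X (j-1)`. -/
noncomputable def chernVar (r : ℕ) (j : ℤ) : MvPolynomial (Fin r) ℤ :=
  if j = 0 then 1
  else if h : 1 ≤ j ∧ j ≤ (r : ℤ) then MvPolynomial.X ⟨(j - 1).toNat, by omega⟩ else 0

/-- `lam` is a partition of weight `k` with parts at most `r`, i.e. an element of `Γ(k, r)`. -/
def IsPartitionIn (k r : ℕ) (lam : Fin k → ℕ) : Prop :=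
  (∀ i, lam i ≤ r) ∧ (∀ i j : Fin k, i ≤ j → lam j ≤ lam i) ∧ (∑ j, lam j = k)

/-- The Jacobi–Trudi Schur polynomial `S_λ = det (c_{λ_i − i + j})` in `ℤ[c_1, …, c_r]`. -/
noncomputable def schurPoly (r k : ℕ) (lam : Fin k → ℕ) : MvPolynomial (Fin r) ℤ :=
  Matrix.det (Matrix.of fun i j : Fin k =>
    chernVar r ((lam i : ℤ) - (i : ℕ) + (j : ℕ)))

/-- The cone `P(k, r)` of nonnegative integer combinations of Schur polynomials `S_λ`,
`λ ∈ Γ(k, r)` (equivalently, the additive submonoid generated by these `S_λ`). -/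
noncomputable def schurCone (r k : ℕ) : AddSubmonoid (MvPolynomial (Fin r) ℤ) :=
  AddSubmonoid.closure
    {p | ∃ lam : Fin k → ℕ, IsPartitionIn k r lam ∧ p = schurPoly r k lam}

open Finset PowerSeries Matrix

namespace Matrix

variable {A : Type*} [CommRing A]

theorem det_of_sum_rows {m ι : Type*} [DecidableEq m] [Fintype m] (S : m → Finset ι)
    (g : m → ι → m → A) :
    (of fun i j => ∑ s ∈ S i, g i s j).det
      = ∑ s ∈ Fintype.piFinset S, (of fun i j => g i (s i) j).det := by
  have hrows : (of fun i j => ∑ s ∈ S i, g i s j) = fun i => ∑ s ∈ S i, g i s := by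
    ext i j
    simp only [of_apply, Finset.sum_apply]
  rw [hrows]
  exact detRowAlternating.toMultilinearMap.map_sum_finset g S

variable {n : ℕ} (d : Fin (n + 1) → A) (M : Matrix (Fin (n + 1)) (Fin (n + 1)) A)

def subdiagonal : Matrix (Fin (n + 1)) (Fin (n + 1)) A :=
  of fun i j => if (i : ℕ) = j + 1 then d i else 0

theorem det_one_sub_subdiagonal : (1 - subdiagonal d).det = 1 := by
  rw [det_of_isLowerTriangular]
  · simp [subdiagonal]
  · intro i j hij
    have hij' : (i : ℕ) < j := hij
    have hne : (i : ℕ) ≠ j + 1 := by omega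
    simp [subdiagonal, one_apply_ne (Fin.ne_of_lt hij : i ≠ j), hne]

theorem subdiagonal_mul_apply_zero (j : Fin (n + 1)) : (subdiagonal d * M) 0 j = 0 := by
  simp [mul_apply, subdiagonal]

theorem subdiagonal_mul_apply_succ (i : Fin n) (j : Fin (n + 1)) :
    (subdiagonal d * M) i.succ j = d i.succ * M i.castSucc j := by
  rw [mul_apply, Finset.sum_eq_single i.castSucc]
  · simp [subdiagonal]
  · intro l _ hl
    have : (i : ℕ) ≠ l := fun h => hl (Fin.ext (by simp [h]))
    simp [subdiagonal, this]
  · simp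

theorem mul_subdiagonal_apply_last (i : Fin (n + 1)) : (M * subdiagonal d) i (Fin.last n) = 0 := by
  rw [mul_apply]
  refine Finset.sum_eq_zero fun l _ => ?_
  have : (l : ℕ) ≠ n + 1 := by omega
  simp [subdiagonal, this]

theorem mul_subdiagonal_apply_castSucc (i : Fin (n + 1)) (j : Fin n) :
    (M * subdiagonal d) i j.castSucc = M i j.succ * d j.succ := by
  rw [mul_apply, Finset.sum_eq_single j.succ]
  · simp [subdiagonal]
  · intro l _ hl
    have : (l : ℕ) ≠ j + 1 := fun h => hl (Fin.ext (by simpa using h))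
    simp [subdiagonal, this]
  · simp

theorem det_eq_mul_det_submatrix_castSucc
    (h : ∀ j : Fin n, M (Fin.last n) j.castSucc = 0) :
    M.det = M (Fin.last n) (Fin.last n) * (M.submatrix Fin.castSucc Fin.castSucc).det := by
  rw [det_succ_row M (Fin.last n), Fin.sum_univ_castSucc]
  simp [h, ← two_mul, pow_mul]

end Matrix

section JacobiTrudi

variable {R : Type*} [CommRing R] (c : ℤ → R)

def jacobiTrudi {k : ℕ} (μ : Fin k → ℕ) : R :=
  (of fun i j : Fin k => c ((μ i : ℤ) - (i : ℕ) + (j : ℕ))).det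

theorem jacobiTrudi_eq_zero {N k : ℕ} (hN : ∀ j : ℤ, N < j → c j = 0) {μ : Fin k → ℕ}
    (hμ : Antitone μ) (i : Fin k) (hi : N < μ i) : jacobiTrudi c μ = 0 := by
  have hfirst : μ i ≤ μ ⟨0, i.pos⟩ := hμ (Fin.mk_le_of_le_val (Nat.zero_le _))
  exact det_eq_zero_of_row_eq_zero ⟨0, i.pos⟩ fun j => hN _ (by dsimp only; omega)

theorem jacobiTrudi_single {n : ℕ} (hc0 : c 0 = 1) (hneg : ∀ j : ℤ, j < 0 → c j = 0)
    (σ : ℕ) : jacobiTrudi c (Pi.single (0 : Fin (n + 1)) σ) = c σ := by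
  rw [jacobiTrudi, det_of_isUpperTriangular, Fin.prod_univ_succ]
  · simp [Pi.single_apply, hc0]
  · intro i j hij
    have hi : i ≠ 0 := by rintro rfl; exact absurd hij (by simp)
    have : (j : ℕ) < i := hij
    simp [Pi.single_apply, hi, hneg, this]

def tailSeries (a : ℤ) : R⟦X⟧ :=
  mk fun s => c (a + s)

theorem tailSeries_eq (a : ℤ) : tailSeries c a = C (c a) + X * tailSeries c (a + 1) := by
  ext s
  rcases s with _ | s
  · simp [tailSeries]
  · simp [tailSeries, coeff_succ_X_mul, add_assoc, add_comm (1 : ℤ)]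

theorem sum_range_C_mul_X_pow (a : ℤ) (e : ℕ) :
    ∑ s ∈ range (e + 1), C (c (a + s)) * X ^ s
      = tailSeries c a - X ^ (e + 1) * tailSeries c (a + e + 1) := by
  induction e with
  | zero => simp [tailSeries_eq c a]
  | succ e ih =>
    rw [sum_range_succ, ih, tailSeries_eq c (a + e + 1)]
    push_cast
    ring_nf

end JacobiTrudi

section Pieri

variable {R : Type*} [CommRing R] (c : ℤ → R) {n : ℕ}

-- Row 0 is not constrained by `μ`; bounding it by `N` loses nothing as `c` vanishes above `N`.
def stripBound (N : ℕ) (μ : Fin (n + 1) → ℕ) : Fin (n + 1) → ℕ :=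
  Fin.cons N fun i => μ i.castSucc - μ i.succ

def horizontalStrips (N : ℕ) (μ : Fin (n + 1) → ℕ) (m : ℕ) :
    Finset (Fin (n + 1) → ℕ) :=
  {s ∈ Fintype.piFinset fun i => range (stripBound N μ i + 1) | ∑ i, s i = m}

def tailMatrix (μ : Fin (n + 1) → ℕ) : Matrix (Fin (n + 1)) (Fin (n + 1)) R⟦X⟧ :=
  of fun i j => tailSeries c ((μ i : ℤ) - (i : ℕ) + (j : ℕ))

theorem sum_range_rows_eq_mul_tailMatrix {N : ℕ} (hN : ∀ j : ℤ, N < j → c j = 0)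
    {μ : Fin (n + 1) → ℕ} (hμ : Antitone μ) :
    (of fun i j : Fin (n + 1) => ∑ s ∈ range (stripBound N μ i + 1),
        C (c ((μ i : ℤ) - (i : ℕ) + (j : ℕ) + s)) * X ^ s)
      = (1 - subdiagonal fun i => X ^ (stripBound N μ i + 1)) * tailMatrix c μ := by
  ext i j : 1
  rw [of_apply, sum_range_C_mul_X_pow, sub_mul, one_mul, Matrix.sub_apply]
  congr 1
  induction i using Fin.cases with
  | zero =>
    have htail : tailSeries c ((μ 0 : ℤ) + (j : ℕ) + N + 1) = 0 := by
      ext s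
      simp only [tailSeries, coeff_mk, map_zero]
      exact hN _ (by omega)
    simp [stripBound, htail, subdiagonal_mul_apply_zero]
  | succ i =>
    have hle : μ i.succ ≤ μ i.castSucc := hμ (Fin.castSucc_le_succ i)
    rw [subdiagonal_mul_apply_succ]
    simp only [stripBound, Fin.cons_succ, tailMatrix, of_apply, Fin.val_succ, Fin.val_castSucc]
    congr 2
    push_cast [hle]
    ring

theorem det_tailMatrix (hc0 : c 0 = 1) (hneg : ∀ j : ℤ, j < 0 → c j = 0)
    {μ : Fin (n + 1) → ℕ} (hlast : μ (Fin.last n) = 0) :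
    (tailMatrix c μ).det = tailSeries c 0 * C (jacobiTrudi c μ) := by
  -- The column operations `col j ↦ col j - X • col (j + 1)` turn all but the last column into
  -- those of the Jacobi–Trudi matrix, and leave `(0, …, 0, tailSeries c 0)` as the last row.
  set W := tailMatrix c μ * (1 - subdiagonal fun _ => X) with hWdef
  set J := (of fun i j : Fin (n + 1) => c ((μ i : ℤ) - (i : ℕ) + (j : ℕ))).map (C (R := R))
  have hW : ∀ i (j : Fin n), W i j.castSucc = J i j.castSucc := by
    intro i j
    rw [hWdef, mul_sub, mul_one, Matrix.sub_apply, mul_subdiagonal_apply_castSucc]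
    simp only [J, tailMatrix, of_apply, map_apply, Fin.val_succ, Fin.val_castSucc]
    rw [tailSeries_eq c, Nat.cast_add, Nat.cast_one, ← add_assoc]
    ring
  have hJ : ∀ j : Fin n, J (Fin.last n) j.castSucc = 0 := by
    intro j
    simp only [J, map_apply, of_apply, hlast, Fin.val_last, Fin.val_castSucc]
    rw [hneg _ (by omega), map_zero]
  have hWlast : W (Fin.last n) (Fin.last n) = tailSeries c 0 := by
    simp [W, mul_sub, mul_subdiagonal_apply_last, tailMatrix, hlast]
  have hJlast : J (Fin.last n) (Fin.last n) = 1 := by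
    simp [J, hlast, hc0]
  have hsub : W.submatrix Fin.castSucc Fin.castSucc = J.submatrix Fin.castSucc Fin.castSucc :=
    Matrix.ext fun i j => hW _ j
  calc (tailMatrix c μ).det = W.det := by
        rw [det_mul, det_one_sub_subdiagonal, mul_one]
    _ = tailSeries c 0 * J.det := by
        rw [det_eq_mul_det_submatrix_castSucc W (fun j => (hW _ j).trans (hJ j)), hWlast, hsub,
          det_eq_mul_det_submatrix_castSucc J hJ, hJlast, one_mul]
    _ = tailSeries c 0 * C (jacobiTrudi c μ) := by
        rw [jacobiTrudi, RingHom.map_det]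
        rfl

theorem sum_C_jacobiTrudi_mul_X_pow (hc0 : c 0 = 1) (hneg : ∀ j : ℤ, j < 0 → c j = 0)
    {N : ℕ} (hN : ∀ j : ℤ, N < j → c j = 0) {μ : Fin (n + 1) → ℕ} (hμ : Antitone μ)
    (hlast : μ (Fin.last n) = 0) :
    ∑ s ∈ Fintype.piFinset fun i => range (stripBound N μ i + 1),
        C (jacobiTrudi c (μ + s)) * X ^ (∑ i, s i)
      = tailSeries c 0 * C (jacobiTrudi c μ) := by
  have hterm : ∀ s : Fin (n + 1) → ℕ, C (jacobiTrudi c (μ + s)) * X ^ (∑ i, s i)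
      = (of fun i j : Fin (n + 1) =>
          C (c ((μ i : ℤ) - (i : ℕ) + (j : ℕ) + s i)) * X ^ s i).det := by
    intro s
    have hrow : (of fun i j : Fin (n + 1) =>
          C (c ((μ i : ℤ) - (i : ℕ) + (j : ℕ) + s i)) * X ^ s i)
        = of fun i j => X ^ s i * ((of fun i j : Fin (n + 1) =>
            c (((μ + s) i : ℕ) - (i : ℕ) + (j : ℕ))).map C) i j := by
      ext i j : 1
      simp only [of_apply, map_apply, Pi.add_apply, Nat.cast_add]
      rw [mul_comm]
      ring_nf
    rw [hrow, det_mul_column, prod_pow_eq_pow_sum, mul_comm, jacobiTrudi, RingHom.map_det]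
    rfl
  rw [sum_congr rfl fun s _ => hterm s,
    ← det_of_sum_rows _ fun i (s : ℕ) j =>
      C (c ((μ i : ℤ) - (i : ℕ) + (j : ℕ) + s)) * X ^ s,
    sum_range_rows_eq_mul_tailMatrix c hN hμ, det_mul,
    det_one_sub_subdiagonal, one_mul, det_tailMatrix c hc0 hneg hlast]

theorem mul_jacobiTrudi (hc0 : c 0 = 1) (hneg : ∀ j : ℤ, j < 0 → c j = 0)
    {N : ℕ} (hN : ∀ j : ℤ, N < j → c j = 0) {μ : Fin (n + 1) → ℕ} (hμ : Antitone μ)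
    (hlast : μ (Fin.last n) = 0) (m : ℕ) :
    c m * jacobiTrudi c μ = ∑ s ∈ horizontalStrips N μ m, jacobiTrudi c (μ + s) := by
  have h := congrArg (coeff m) (sum_C_jacobiTrudi_mul_X_pow c hc0 hneg hN hμ hlast)
  simp only [map_sum, coeff_C_mul_X_pow, coeff_mul_C, tailSeries, coeff_mk, zero_add] at h
  rw [← h, horizontalStrips, sum_filter]
  exact sum_congr rfl fun s _ => by simp [eq_comm]

theorem antitone_add_of_mem_horizontalStrips {N m : ℕ} {μ s : Fin (n + 1) → ℕ}
    (hμ : Antitone μ) (hs : s ∈ horizontalStrips N μ m) : Antitone (μ + s) := by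
  rw [Fin.antitone_iff_succ_le]
  intro i
  have hle : μ i.succ ≤ μ i.castSucc := hμ (Fin.castSucc_le_succ i)
  have hsi := Fintype.mem_piFinset.mp (mem_filter.mp hs).1 i.succ
  simp only [stripBound, Fin.cons_succ, mem_range] at hsi
  simp only [Pi.add_apply]
  omega

theorem single_mem_horizontalStrips {N m : ℕ} (μ : Fin (n + 1) → ℕ) (hm : m ≤ N) :
    Pi.single 0 m ∈ horizontalStrips N μ m := by
  refine mem_filter.mpr ⟨Fintype.mem_piFinset.mpr fun i => ?_, by simp⟩
  induction i using Fin.cases with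
  | zero => simpa [stripBound, Nat.lt_succ_iff] using hm
  | succ i => simp [Fin.succ_ne_zero]

end Pieri

section Cone

variable {R : Type*} [CommRing R] (c : ℤ → R)

def jacobiTrudiCone (k w : ℕ) : AddSubmonoid R :=
  AddSubmonoid.closure
    {p | ∃ ν : Fin k → ℕ, Antitone ν ∧ ∑ i, ν i = w ∧ p = jacobiTrudi c ν}

theorem jacobiTrudi_mem_jacobiTrudiCone {k w : ℕ} {ν : Fin k → ℕ} (hν : Antitone ν)
    (hw : ∑ i, ν i = w) : jacobiTrudi c ν ∈ jacobiTrudiCone c k w :=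
  AddSubmonoid.subset_closure ⟨ν, hν, hw, rfl⟩

variable {n : ℕ}

theorem Antitone.last_eq_zero_of_sum_lt {ν : Fin (n + 1) → ℕ} (hν : Antitone ν)
    (h : ∑ i, ν i < n + 1) : ν (Fin.last n) = 0 := by
  by_contra hne
  have : ∑ _i : Fin (n + 1), 1 ≤ ∑ i, ν i :=
    sum_le_sum fun i _ => (Nat.one_le_iff_ne_zero.mpr hne).trans (hν (Fin.le_last i))
  simp only [sum_const, card_univ, Fintype.card_fin, smul_eq_mul, mul_one] at this
  omega

theorem antitone_single_zero (m : ℕ) : Antitone (Pi.single (0 : Fin (n + 1)) m) := by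
  intro i j hij
  rcases eq_or_ne j 0 with rfl | hj
  · rw [Fin.le_zero_iff.mp hij]
  · simp [hj]

variable (hc0 : c 0 = 1) (hneg : ∀ j : ℤ, j < 0 → c j = 0) {N : ℕ}
  (hN : ∀ j : ℤ, N < j → c j = 0)
include hc0 hneg hN

theorem mul_jacobiTrudi_sub_mem_jacobiTrudiCone {w m : ℕ} (hm : m ≤ N) (hw : w + m ≤ n + 1)
    {ν : Fin (n + 1) → ℕ} (hν : Antitone ν) (hνw : ∑ i, ν i = w) :
    c m * jacobiTrudi c ν - jacobiTrudi c (ν + Pi.single 0 m)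
      ∈ jacobiTrudiCone c (n + 1) (w + m) := by
  rcases Nat.eq_zero_or_pos m with rfl | hm0
  · simp [hc0]
  have hlast := hν.last_eq_zero_of_sum_lt (by omega)
  rw [mul_jacobiTrudi c hc0 hneg hN hν hlast,
    ← add_sum_erase _ _ (single_mem_horizontalStrips ν hm), add_sub_cancel_left]
  refine AddSubmonoid.sum_mem _ fun s hs => ?_
  have hs := mem_of_mem_erase hs
  refine jacobiTrudi_mem_jacobiTrudiCone c (antitone_add_of_mem_horizontalStrips hν hs) ?_
  rw [← hνw, ← (mem_filter.mp hs).2, ← sum_add_distrib]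
  rfl

theorem mul_mem_jacobiTrudiCone {w m : ℕ} (hm : m ≤ N) (hw : w + m ≤ n + 1) {q : R}
    (hq : q ∈ jacobiTrudiCone c (n + 1) w) : c m * q ∈ jacobiTrudiCone c (n + 1) (w + m) := by
  induction hq using AddSubmonoid.closure_induction with
  | mem p hp =>
    obtain ⟨ν, hν, hνw, rfl⟩ := hp
    have hmem : jacobiTrudi c (ν + Pi.single 0 m) ∈ jacobiTrudiCone c (n + 1) (w + m) :=
      jacobiTrudi_mem_jacobiTrudiCone c (hν.add (antitone_single_zero m))
        (by simp [sum_add_distrib, hνw])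
    rw [← sub_add_cancel (c m * jacobiTrudi c ν) (jacobiTrudi c (ν + Pi.single 0 m))]
    exact add_mem (mul_jacobiTrudi_sub_mem_jacobiTrudiCone c hc0 hneg hN hm hw hν hνw) hmem
  | zero => simp
  | add x y _ _ hx hy => simpa [mul_add] using add_mem hx hy

theorem list_prod_sub_mem_jacobiTrudiCone (L : List ℕ) (hL : ∀ m ∈ L, m ≤ N)
    (hsum : L.sum ≤ n + 1) :
    (L.map fun m : ℕ => c m).prod - c L.sum ∈ jacobiTrudiCone c (n + 1) L.sum := by
  induction L with
  | nil => simp [hc0]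
  | cons m L ih =>
    simp only [List.forall_mem_cons, List.sum_cons, List.map_cons, List.prod_cons] at hL hsum ⊢
    have hw : L.sum + m ≤ n + 1 := by omega
    have hprod := mul_mem_jacobiTrudiCone c hc0 hneg hN hL.1 hw (ih hL.2 (by omega))
    have hpieri := mul_jacobiTrudi_sub_mem_jacobiTrudiCone c hc0 hneg hN hL.1 hw
      (antitone_single_zero L.sum) (by simp)
    rw [← Pi.single_add, jacobiTrudi_single c hc0 hneg, jacobiTrudi_single c hc0 hneg]
      at hpieri
    rw [add_comm m]
    convert add_mem hprod hpieri using 1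
    ring

end Cone

theorem chernVar_zero (r : ℕ) : chernVar r 0 = 1 := by
  simp [chernVar]

theorem chernVar_of_neg (r : ℕ) {j : ℤ} (hj : j < 0) : chernVar r j = 0 := by
  rw [chernVar, if_neg (by omega), dif_neg (by omega)]

theorem chernVar_of_lt (r : ℕ) {j : ℤ} (hj : r < j) : chernVar r j = 0 := by
  rw [chernVar, if_neg (by omega), dif_neg (by omega)]

theorem schurPoly_eq_jacobiTrudi (r k : ℕ) (lam : Fin k → ℕ) :
    schurPoly r k lam = jacobiTrudi (chernVar r) lam :=
  rfl

theorem jacobiTrudiCone_chernVar_le_schurCone (r k : ℕ) :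
    jacobiTrudiCone (chernVar r) k k ≤ schurCone r k := by
  refine AddSubmonoid.closure_le.mpr ?_
  rintro _ ⟨ν, hν, hsum, rfl⟩
  by_cases hparts : ∀ i, ν i ≤ r
  · exact AddSubmonoid.subset_closure
      ⟨ν, ⟨hparts, fun i j hij => hν hij, hsum⟩, (schurPoly_eq_jacobiTrudi r k ν).symm⟩
  · obtain ⟨i, hi⟩ := not_forall.mp hparts
    rw [SetLike.mem_coe, jacobiTrudi_eq_zero _ (fun _ => chernVar_of_lt r) hν i (not_le.mp hi)]
    exact zero_mem _

theorem chern_monomial_sub_ck_mem_schurCone_general (r k : ℕ) (hk : 1 ≤ k)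
    (lam : Fin k → ℕ) (hlam : IsPartitionIn k r lam) :
    (∏ j, chernVar r (lam j)) - chernVar r (k : ℤ) ∈ schurCone r k := by
  obtain ⟨n, rfl⟩ : ∃ n, k = n + 1 := ⟨k - 1, by omega⟩
  obtain ⟨hparts, -, hsum⟩ := hlam
  have h := list_prod_sub_mem_jacobiTrudiCone (chernVar r) (n := n) (chernVar_zero r)
    (fun _ => chernVar_of_neg r) (fun _ => chernVar_of_lt r) (List.ofFn lam)
    (fun _ hm => (List.mem_ofFn.mp hm).elim fun i hi => hi ▸ hparts i)
    (by rw [List.sum_ofFn, hsum])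
  rw [List.map_ofFn, List.prod_ofFn, List.sum_ofFn, hsum] at h
  exact jacobiTrudiCone_chernVar_le_schurCone r (n + 1) h

/-- For `r ≥ 1`, `k ≥ 1` and a partition `λ ∈ Γ(k, r)`, the difference
`c_{λ_1}·c_{λ_2}⋯c_{λ_k} − c_k` lies in the cone `P(k, r)` of nonnegative integer
combinations of Schur polynomials `S_μ`, `μ ∈ Γ(k, r)`. -/
theorem chern_monomial_sub_ck_mem_schurCone (r k : ℕ) (hr : 1 ≤ r) (hk : 1 ≤ k)
    (lam : Fin k → ℕ) (hlam : IsPartitionIn k r lam) :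
    (∏ j, chernVar r (lam j)) - chernVar r (k : ℤ) ∈ schurCone r k :=
  chern_monomial_sub_ck_mem_schurCone_general r k hk lam hlam
end

section
/- Let n ≥ 1 and let A, B be n×n complex matrices such that A has rank at least 2 and for every vector v ∈ ℂⁿ the vectors Av and Bv are linearly dependent, i.e. (Av)_i·(Bv)_j = (Av)_j·(Bv)_i for all indices i, j. Then there exists λ ∈ ℂ with B = λ·A. -/
open Matrix

/-- If `A` is an `n×n` complex matrix of rank at least `2` and for every vector `v` the
vectors `Av` and `Bv` are linearly dependent (i.e. `(Av)_i·(Bv)_j = (Av)_j·(Bv)_i`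
for all `i, j`), then `B = λ·A` for some `λ ∈ ℂ`. -/
theorem proportional_of_rank_two {n : ℕ} (hn : 1 ≤ n)
    (A B : Matrix (Fin n) (Fin n) ℂ) (hrank : 2 ≤ A.rank)
    (h : ∀ (v : Fin n → ℂ) (i j : Fin n),
      A.mulVec v i * B.mulVec v j = A.mulVec v j * B.mulVec v i) :
    ∃ lam : ℂ, B = lam • A := by
  -- wedge-vanishing implies proportionality
  have lem1 : ∀ x y : Fin n → ℂ, (∀ i j, x i * y j = x j * y i) → x ≠ 0 →
      ∃ c : ℂ, y = c • x := by
    intro x y hxy hx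
    obtain ⟨i, hi⟩ := Function.ne_iff.mp hx
    simp only [Pi.zero_apply] at hi
    refine ⟨y i / x i, funext fun j => ?_⟩
    have hij := hxy i j
    simp only [Pi.smul_apply, smul_eq_mul]
    rw [div_mul_eq_mul_div, eq_div_iff hi]
    linear_combination hij
  -- A's range is not contained in the span of a single vector
  have hrank1 : ∀ z : Fin n → ℂ, ¬ (∀ w, ∃ c : ℂ, A.mulVec w = c • z) := by
    intro z hall
    have hle : LinearMap.range A.mulVecLin ≤ Submodule.span ℂ {z} := by
      rintro x ⟨w, rfl⟩
      obtain ⟨c, hc⟩ := hall w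
      rw [Matrix.mulVecLin_apply, hc]
      exact Submodule.smul_mem _ c (Submodule.mem_span_singleton_self z)
    have h1 : A.rank ≤ Module.finrank ℂ (Submodule.span ℂ ({z} : Set (Fin n → ℂ))) :=
      Submodule.finrank_mono hle
    have h2 : Module.finrank ℂ (Submodule.span ℂ ({z} : Set (Fin n → ℂ))) ≤ 1 := by
      rcases eq_or_ne z 0 with rfl | hz
      · rw [Submodule.span_zero_singleton]; simp
      · rw [finrank_span_singleton hz]
    omega
  -- kernel of A is contained in kernel of B
  have hker : ∀ v, A.mulVec v = 0 → B.mulVec v = 0 := by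
    intro v hAv
    by_contra hBv
    apply hrank1 (B.mulVec v)
    intro w
    refine lem1 _ _ (fun i j => ?_) hBv
    have h1 := h w i j
    have h2 := h (w + v) i j
    simp only [mulVec_add, hAv, add_zero, Pi.add_apply, Pi.zero_apply] at h2
    linear_combination h1 - h2
  -- key: if two images have nonvanishing wedge, the scalars agree
  have key : ∀ (u v : Fin n → ℂ) (cu cv : ℂ), B.mulVec u = cu • A.mulVec u →
      B.mulVec v = cv • A.mulVec v →
      (∃ i j, A.mulVec u i * A.mulVec v j ≠ A.mulVec u j * A.mulVec v i) → cu = cv := by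
    intro u v cu cv hu hv ⟨i, j, hij⟩
    have huv := h (u + v) i j
    simp only [mulVec_add, hu, hv, Pi.add_apply, Pi.smul_apply, smul_eq_mul] at huv
    have : (cv - cu) * (A.mulVec u i * A.mulVec v j - A.mulVec u j * A.mulVec v i) = 0 := by
      linear_combination huv
    rcases mul_eq_zero.mp this with h0 | h0
    · exact (sub_eq_zero.mp h0).symm
    · exact absurd (sub_eq_zero.mp h0) hij
  -- pick a base vector with nonzero image
  have hex : ∃ u, A.mulVec u ≠ 0 := by
    by_contra h'
    push_neg at h'
    exact hrank1 0 (fun w => ⟨0, by simp [h' w]⟩)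
  obtain ⟨u₀, hu₀⟩ := hex
  obtain ⟨c₀, hc₀⟩ := lem1 _ _ (h u₀) hu₀
  -- there is a vector whose image has nonvanishing wedge with a given nonzero vector
  have hW : ∀ z : Fin n → ℂ, z ≠ 0 →
      ∃ w i j, z i * A.mulVec w j ≠ z j * A.mulVec w i := by
    intro z hz
    by_contra h'
    push_neg at h'
    exact hrank1 z (fun w => lem1 _ _ (fun i j => h' w i j) hz)
  -- main claim
  have claim : ∀ v, B.mulVec v = c₀ • A.mulVec v := by
    intro v
    rcases eq_or_ne (A.mulVec v) 0 with hAv | hAv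
    · rw [hker v hAv, hAv, smul_zero]
    obtain ⟨cv, hcv⟩ := lem1 _ _ (h v) hAv
    rw [hcv]
    by_cases hw : ∃ i j, A.mulVec u₀ i * A.mulVec v j ≠ A.mulVec u₀ j * A.mulVec v i
    · rw [key u₀ v c₀ cv hc₀ hcv hw]
    push_neg at hw
    -- A v is proportional to A u₀
    obtain ⟨d, hd⟩ := lem1 _ _ hw hu₀
    obtain ⟨w, i, j, hij⟩ := hW (A.mulVec u₀) hu₀
    have hAw : A.mulVec w ≠ 0 := by
      intro h0
      rw [h0] at hij
      simp at hij
    obtain ⟨cw, hcw⟩ := lem1 _ _ (h w) hAw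
    have e1 : c₀ = cw := key u₀ w c₀ cw hc₀ hcw ⟨i, j, hij⟩
    have hd0 : d ≠ 0 := by
      rintro rfl
      rw [zero_smul] at hd
      exact hAv hd
    have e2 : cv = cw := by
      refine key v w cv cw hcv hcw ⟨i, j, ?_⟩
      rw [hd]
      simp only [Pi.smul_apply, smul_eq_mul]
      intro hcontra
      apply hij
      have : d * (A.mulVec u₀ i * A.mulVec w j) = d * (A.mulVec u₀ j * A.mulVec w i) := by
        linear_combination hcontra
      exact mul_left_cancel₀ hd0 this
    rw [e1, e2]
  refine ⟨c₀, ?_⟩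
  ext i j
  have := congrFun (claim (Pi.single j 1)) i
  simpa using this
end

section
/- Let n ≥ 1 and let H_1, …, H_m be symmetric n×n complex matrices such that for all α, β ∈ {1, …, m}, every vector v ∈ ℂⁿ, and all indices i, j, one has (H_α v)_i·(H_β v)_j = (H_α v)_j·(H_β v)_i (i.e. the vectors H_α v and H_β v are linearly dependent for every v). Then the ℂ-linear span of {H_1, …, H_m} inside the space of n×n complex matrices has dimension at most 1. -/
/-!
Fix `A ≠ 0` and `u` with `a := A u ≠ 0`. Subtracting a multiple of `A` from `B` we may assume
`B u = 0`; polarizing the hypothesis at `u` then puts the image of `B` in the line through `a`,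
so `B v = β(v) a` for a linear form `β`, and the hypothesis becomes `β(v) · (A v ∧ a) = 0`.
A product of two linear forms vanishes only if one factor does, so either `B = 0` or the image
of `A` lies in the line through `a` as well. In the latter case symmetry makes `A` and `B`
multiples of `a aᵀ`; then `A u = a ≠ 0` forces `aᵀ u ≠ 0`, and `B u = 0` forces `B = 0`.
-/

open Matrix

theorem eq_smul_of_mul_eq_mul {ι K : Type*} [Field K] {a b : ι → K} {i₀ : ι} (ha : a i₀ ≠ 0)
    (h : ∀ j, a i₀ * b j = a j * b i₀) : b = (b i₀ / a i₀) • a := by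
  ext j
  simp only [Pi.smul_apply, smul_eq_mul]
  field_simp
  linear_combination h j

theorem LinearMap.eq_zero_of_mul_eq_zero {R M : Type*} [CommRing R] [NoZeroDivisors R]
    [AddCommGroup M] [Module R M] {f g : M →ₗ[R] R} (hg : g ≠ 0) (h : ∀ v, f v * g v = 0) :
    f = 0 := by
  obtain ⟨v₀, hv₀⟩ : ∃ v₀, g v₀ ≠ 0 := by
    by_contra! H
    exact hg (LinearMap.ext H)
  have hf₀ : f v₀ = 0 := (mul_eq_zero.mp (h v₀)).resolve_right hv₀
  ext v
  have hsum := h (v + v₀)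
  simp only [map_add, hf₀] at hsum
  have : f v * g v₀ = 0 := by linear_combination hsum - h v
  exact (mul_eq_zero.mp this).resolve_right hv₀

namespace Matrix.IsSymm

variable {ι K : Type*} [Fintype ι] [DecidableEq ι] [Field K]

theorem exists_eq_smul_vecMulVec {B : Matrix ι ι K} (hB : B.IsSymm) {a : ι → K} (ha : a ≠ 0)
    (h : ∀ v, ∃ c : K, B *ᵥ v = c • a) : ∃ l : K, B = l • vecMulVec a a := by
  choose c hc using fun k => h (Pi.single k 1)
  have hcol : ∀ i k, B i k = c k * a i := fun i k => by
    simpa using congrFun (hc k) i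
  obtain ⟨i₀, hi₀⟩ : ∃ i, a i ≠ 0 := Function.ne_iff.mp ha
  refine ⟨c i₀ / a i₀, Matrix.ext fun i k => ?_⟩
  have hsymm : c k * a i₀ = c i₀ * a k := by rw [← hcol, ← hcol, hB.apply]
  simp only [smul_apply, vecMulVec_apply, smul_eq_mul, hcol]
  field_simp
  linear_combination a i * hsymm

variable {A B : Matrix ι ι K}

theorem eq_zero_of_parallel_mulVec (hA : A.IsSymm) (hB : B.IsSymm)
    (hpar : ∀ v i j, (A *ᵥ v) i * (B *ᵥ v) j = (A *ᵥ v) j * (B *ᵥ v) i)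
    {u : ι → K} (hAu : A *ᵥ u ≠ 0) (hBu : B *ᵥ u = 0) : B = 0 := by
  set a := A *ᵥ u
  have hBpar : ∀ w i j, a i * (B *ᵥ w) j = a j * (B *ᵥ w) i := fun w i j => by
    have huw := hpar (u + w) i j
    simp only [mulVec_add, hBu, Pi.add_apply, Pi.zero_apply, zero_add] at huw
    linear_combination huw - hpar w i j
  obtain ⟨i₀, hi₀⟩ : ∃ i, a i ≠ 0 := Function.ne_iff.mp hAu
  have hBv v : B *ᵥ v = ((B *ᵥ v) i₀ / a i₀) • a := eq_smul_of_mul_eq_mul hi₀ (hBpar v i₀)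
  let g : (ι → K) →ₗ[K] K := LinearMap.proj i₀ ∘ₗ B.mulVecLin
  let f (i : ι) : (ι → K) →ₗ[K] K :=
    a i₀ • (LinearMap.proj i ∘ₗ A.mulVecLin) - a i • (LinearMap.proj i₀ ∘ₗ A.mulVecLin)
  -- `f i v` is the `(i, i₀)` entry of `A v ∧ a`, and `g v` is `a i₀ β(v)`
  have hfg i v : f i v * g v = 0 := by
    simp only [f, g, LinearMap.sub_apply, LinearMap.smul_apply, LinearMap.comp_apply,
      LinearMap.proj_apply, mulVecLin_apply, smul_eq_mul]
    linear_combination a i₀ * hpar v i i₀ - (A *ᵥ v) i₀ * hBpar v i i₀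
  by_cases hg : g = 0
  · refine ext_iff_mulVec.mpr fun v => ?_
    have : (B *ᵥ v) i₀ = 0 := LinearMap.congr_fun hg v
    rw [hBv v, this, zero_div, zero_smul, zero_mulVec]
  have hAv v : A *ᵥ v = ((A *ᵥ v) i₀ / a i₀) • a := by
    refine eq_smul_of_mul_eq_mul hi₀ fun j => ?_
    have := LinearMap.congr_fun (LinearMap.eq_zero_of_mul_eq_zero hg (hfg j)) v
    simp only [f, LinearMap.sub_apply, LinearMap.smul_apply, LinearMap.comp_apply,
      LinearMap.proj_apply, mulVecLin_apply, smul_eq_mul, LinearMap.zero_apply] at this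
    linear_combination this
  obtain ⟨ν, hν⟩ := hA.exists_eq_smul_vecMulVec hAu fun v => ⟨_, hAv v⟩
  obtain ⟨l, hl⟩ := hB.exists_eq_smul_vecMulVec hAu fun v => ⟨_, hBv v⟩
  have hAu₀ : a i₀ = ν * (a ⬝ᵥ u) * a i₀ := by
    conv_lhs => rw [show a = A *ᵥ u from rfl, hν, smul_mulVec, vecMulVec_mulVec]
    simp [mul_assoc]
  have hBu₀ : l * (a ⬝ᵥ u) * a i₀ = 0 := by
    have := congrFun hBu i₀
    rw [hl, smul_mulVec, vecMulVec_mulVec] at this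
    simpa [mul_assoc] using this
  have hl₀ : l * a i₀ = 0 := by linear_combination l * hAu₀ + ν * hBu₀
  rw [hl, (mul_eq_zero.mp hl₀).resolve_right hi₀, zero_smul]

theorem exists_eq_smul_of_parallel_mulVec (hA : A.IsSymm) (hB : B.IsSymm)
    (hpar : ∀ v i j, (A *ᵥ v) i * (B *ᵥ v) j = (A *ᵥ v) j * (B *ᵥ v) i) (hA₀ : A ≠ 0) :
    ∃ c : K, B = c • A := by
  obtain ⟨u, hAu⟩ : ∃ u, A *ᵥ u ≠ 0 := by
    by_contra! H
    exact hA₀ (ext_iff_mulVec.mpr fun v => by simp [H v])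
  obtain ⟨i₀, hi₀⟩ : ∃ i, (A *ᵥ u) i ≠ 0 := Function.ne_iff.mp hAu
  obtain ⟨c, hc⟩ : ∃ c : K, B *ᵥ u = c • A *ᵥ u := ⟨_, eq_smul_of_mul_eq_mul hi₀ (hpar u i₀)⟩
  refine ⟨c, sub_eq_zero.mp (eq_zero_of_parallel_mulVec hA (hB.sub (hA.smul c)) ?_ hAu ?_)⟩
  · intro v i j
    simp only [sub_mulVec, smul_mulVec, Pi.sub_apply, Pi.smul_apply, smul_eq_mul]
    linear_combination hpar v i j
  · rw [sub_mulVec, smul_mulVec, hc, sub_self]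

end Matrix.IsSymm

theorem span_symmetric_hessians_dim_le_one_general {n m : ℕ}
    (H : Fin m → Matrix (Fin n) (Fin n) ℂ)
    (hsymm : ∀ α, (H α).IsSymm)
    (h : ∀ (α β : Fin m) (v : Fin n → ℂ) (i j : Fin n),
      (H α).mulVec v i * (H β).mulVec v j = (H α).mulVec v j * (H β).mulVec v i) :
    Module.finrank ℂ ↥(Submodule.span ℂ (Set.range H)) ≤ 1 := by
  obtain ⟨A, hA⟩ : ∃ A, ∀ β, ∃ c : ℂ, H β = c • A := by
    by_cases hzero : ∀ α, H α = 0
    · exact ⟨0, fun β => ⟨0, by rw [hzero, smul_zero]⟩⟩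
    push Not at hzero
    obtain ⟨α, hα⟩ := hzero
    exact ⟨H α, fun β => (hsymm α).exists_eq_smul_of_parallel_mulVec (hsymm β) (h α β) hα⟩
  have hle : Submodule.span ℂ (Set.range H) ≤ ℂ ∙ A := by
    rw [Submodule.span_le]
    rintro _ ⟨β, rfl⟩
    obtain ⟨c, hc⟩ := hA β
    exact hc ▸ Submodule.smul_mem _ c (Submodule.mem_span_singleton_self A)
  calc Module.finrank ℂ ↥(Submodule.span ℂ (Set.range H))
      ≤ Module.finrank ℂ ↥(ℂ ∙ A) := Submodule.finrank_mono hle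
    _ ≤ 1 := by simpa using finrank_span_le_card ({A} : Set _)

/-- Let `H_1, …, H_m` be symmetric `n×n` complex matrices such that for all `α, β`,
every vector `v`, and all indices `i, j`, one has
`(H_α v)_i·(H_β v)_j = (H_α v)_j·(H_β v)_i` (i.e. `H_α v` and `H_β v` are linearly
dependent for every `v`).  Then the `ℂ`-linear span of `{H_1, …, H_m}` in the space of
`n×n` complex matrices has dimension at most `1`. -/
theorem span_symmetric_hessians_dim_le_one {n m : ℕ} (hn : 1 ≤ n)
    (H : Fin m → Matrix (Fin n) (Fin n) ℂ)
    (hsymm : ∀ α, (H α).IsSymm)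
    (h : ∀ (α β : Fin m) (v : Fin n → ℂ) (i j : Fin n),
      (H α).mulVec v i * (H β).mulVec v j = (H α).mulVec v j * (H β).mulVec v i) :
    Module.finrank ℂ ↥(Submodule.span ℂ (Set.range H)) ≤ 1 :=
  span_symmetric_hessians_dim_le_one_general H hsymm h
end
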